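/- arXiv:1104.2450 — 2 statements merged into one kernel-verified Lean document; each statement's English description precedes it below -/
import Mathlib

section
/- Let n ≥ 1 and for a positive integer m let N_m denote the kernel of the reduction-mod-m homomorphism Sp(2n, ℤ) → Sp(2n, ℤ/mℤ). For all distinct primes p and q, the natural group homomorphism Sp(2n, ℤ)/(N_p ∩ N_q) → (Sp(2n, ℤ)/N_p) × (Sp(2n, ℤ)/N_q), induced by the two quotient maps, is an isomorphism. -/
open Matrix

lemma J_map {l : Type*} [DecidableEq l] [Fintype l] {R S : Type*} [CommRing R] [CommRing S]
    (f : R →+* S) : (Matrix.J l R).map f = Matrix.J l S := by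
  ext i j
  cases i <;> cases j <;>
    simp [Matrix.J, Matrix.map_apply, Matrix.one_apply, apply_ite f]

lemma mem_sp_map {l : Type*} [DecidableEq l] [Fintype l] {R S : Type*} [CommRing R] [CommRing S]
    (f : R →+* S) (A : Matrix (l ⊕ l) (l ⊕ l) R) (hA : A ∈ Matrix.symplecticGroup l R) :
    A.map f ∈ Matrix.symplecticGroup l S := by
  rw [SymplecticGroup.mem_iff] at hA ⊢
  have h2 : (A * Matrix.J l R * Aᵀ).map f = (Matrix.J l R).map f := by rw [hA]
  rw [Matrix.map_mul, Matrix.map_mul, Matrix.transpose_map, J_map f] at h2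
  rw [← Matrix.transpose_map]
  exact h2

/-- Entrywise reduction as a group homomorphism between symplectic groups. -/
def spReduce (l : Type*) [DecidableEq l] [Fintype l] {R S : Type*} [CommRing R] [CommRing S]
    (f : R →+* S) : Matrix.symplecticGroup l R →* Matrix.symplecticGroup l S where
  toFun A := ⟨A.1.map f, mem_sp_map f A.1 A.2⟩
  map_one' := Subtype.ext (by
    show (1 : Matrix (l ⊕ l) (l ⊕ l) R).map f = (1 : Matrix (l ⊕ l) (l ⊕ l) S)
    ext i j
    simp [Matrix.map_apply, Matrix.one_apply, apply_ite f])
  map_mul' A B := Subtype.ext (by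
    show (A.1 * B.1).map f = A.1.map f * B.1.map f
    exact Matrix.map_mul)


namespace SpGen
set_option linter.unusedSectionVars false

section basics
variable {l : Type*} [DecidableEq l] [Fintype l] {R : Type*} [CommRing R]
variable {l : Type*} [DecidableEq l] [Fintype l] {R : Type*} [CommRing R]

@[simp] lemma J_mulVec_inl (x : l ⊕ l → R) (a : l) :
    (Matrix.J l R *ᵥ x) (Sum.inl a) = -x (Sum.inr a) := by
  simp [Matrix.J, Matrix.mulVec, dotProduct, Fintype.sum_sum_type,
    Matrix.fromBlocks, Matrix.one_apply]

@[simp] lemma J_mulVec_inr (x : l ⊕ l → R) (a : l) :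
    (Matrix.J l R *ᵥ x) (Sum.inr a) = x (Sum.inl a) := by
  simp [Matrix.J, Matrix.mulVec, dotProduct, Fintype.sum_sum_type,
    Matrix.fromBlocks, Matrix.one_apply]

lemma J_mulVec_J_mulVec (x : l ⊕ l → R) : Matrix.J l R *ᵥ (Matrix.J l R *ᵥ x) = -x := by
  funext k; cases k <;> simp

lemma J_mulVec_dot_self (x : l ⊕ l → R) : (Matrix.J l R *ᵥ x) ⬝ᵥ x = 0 := by
  simp only [dotProduct, Fintype.sum_sum_type, J_mulVec_inl, J_mulVec_inr]
  rw [← Finset.sum_add_distrib]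
  simp [mul_comm]

@[simp] lemma J_vecMul_inl (x : l ⊕ l → R) (a : l) :
    (x ᵥ* Matrix.J l R) (Sum.inl a) = x (Sum.inr a) := by
  simp [Matrix.J, Matrix.vecMul, dotProduct, Fintype.sum_sum_type,
    Matrix.fromBlocks, Matrix.one_apply]

@[simp] lemma J_vecMul_inr (x : l ⊕ l → R) (a : l) :
    (x ᵥ* Matrix.J l R) (Sum.inr a) = -x (Sum.inl a) := by
  simp [Matrix.J, Matrix.vecMul, dotProduct, Fintype.sum_sum_type,
    Matrix.fromBlocks, Matrix.one_apply]

lemma J_mulVec_vecMul_J (v : l ⊕ l → R) : (Matrix.J l R *ᵥ v) ᵥ* Matrix.J l R = v := by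
  funext k; cases k <;> simp

lemma vecMulVec_mul_mat (v w : l ⊕ l → R) (A : Matrix (l ⊕ l) (l ⊕ l) R) :
    Matrix.vecMulVec v w * A = Matrix.vecMulVec v (w ᵥ* A) := by
  ext i j
  simp [Matrix.mul_apply, Matrix.vecMulVec_apply, Matrix.vecMul, dotProduct,
    Finset.mul_sum, mul_assoc, mul_add]

lemma mat_mul_vecMulVec (v w : l ⊕ l → R) (A : Matrix (l ⊕ l) (l ⊕ l) R) :
    A * Matrix.vecMulVec v w = Matrix.vecMulVec (A *ᵥ v) w := by
  ext i j
  simp [Matrix.mul_apply, Matrix.vecMulVec_apply, Matrix.mulVec, dotProduct,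
    Finset.mul_sum, add_mul, mul_add, mul_assoc, mul_comm, mul_left_comm]

lemma vecMulVec_mul_vecMulVec (v w x y : l ⊕ l → R) :
    Matrix.vecMulVec v w * Matrix.vecMulVec x y = (w ⬝ᵥ x) • Matrix.vecMulVec v y := by
  ext i j
  simp [Matrix.mul_apply, Matrix.vecMulVec_apply, dotProduct, Finset.sum_mul,
    Finset.mul_sum, add_mul, mul_add, mul_assoc, mul_comm, mul_left_comm]

lemma vecMul_vecMulVec (x v w : l ⊕ l → R) :
    x ᵥ* Matrix.vecMulVec v w = (x ⬝ᵥ v) • w := by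
  funext k
  simp [Matrix.vecMul, Matrix.vecMulVec_apply, dotProduct, Finset.sum_mul,
    Finset.mul_sum, add_mul, mul_add, mul_assoc, mul_comm, mul_left_comm]

lemma vecMulVec_transpose (v w : l ⊕ l → R) :
    (Matrix.vecMulVec v w)ᵀ = Matrix.vecMulVec w v := by
  ext i j; simp [Matrix.vecMulVec_apply, mul_comm]

lemma vecMulVec_mulVec (v w x : l ⊕ l → R) :
    Matrix.vecMulVec v w *ᵥ x = (w ⬝ᵥ x) • v := by
  funext k
  simp [Matrix.mulVec, Matrix.vecMulVec_apply, dotProduct, Finset.sum_mul,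
    Finset.mul_sum, add_mul, mul_add, mul_assoc, mul_comm, mul_left_comm]

/-- The symplectic bilinear form. -/
def ω (x y : l ⊕ l → R) : R := (Matrix.J l R *ᵥ y) ⬝ᵥ x

/-- A symplectic transvection. -/
def symT (v : l ⊕ l → R) (c : R) : Matrix (l ⊕ l) (l ⊕ l) R :=
  1 + c • Matrix.vecMulVec v (Matrix.J l R *ᵥ v)

lemma symT_mem (v : l ⊕ l → R) (c : R) : symT v c ∈ Matrix.symplecticGroup l R := by
  rw [SymplecticGroup.mem_iff]
  simp only [symT, transpose_add, transpose_one, transpose_smul, vecMulVec_transpose,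
    add_mul, mul_add, Matrix.one_mul, Matrix.mul_one, Matrix.smul_mul, Matrix.mul_smul]
  rw [vecMulVec_mul_mat, J_mulVec_vecMul_J, mat_mul_vecMulVec, J_mulVec_J_mulVec,
    vecMulVec_mul_mat, vecMul_vecMulVec]
  rw [show v ⬝ᵥ (Matrix.J l R *ᵥ v) = 0 from (dotProduct_comm _ _).trans
    (J_mulVec_dot_self v)]
  have : Matrix.vecMulVec (-v) v = -Matrix.vecMulVec v v := by
    ext i j; simp [Matrix.vecMulVec_apply]
  rw [this]
  rw [show Matrix.vecMulVec v ((0 : R) • v) = 0 by ext i j; simp [Matrix.vecMulVec_apply]]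
  simp

lemma symT_mul_symT_neg (v : l ⊕ l → R) (c : R) : symT v c * symT v (-c) = 1 := by
  simp only [symT, add_mul, mul_add, Matrix.one_mul, Matrix.mul_one, Matrix.smul_mul,
    Matrix.mul_smul, vecMulVec_mul_vecMulVec]
  rw [show (Matrix.J l R *ᵥ v) ⬝ᵥ v = 0 from J_mulVec_dot_self v]
  simp

lemma symT_mulVec (v : l ⊕ l → R) (c : R) (x : l ⊕ l → R) :
    symT v c *ᵥ x = x + (c * ω x v) • v := by
  rw [symT, Matrix.add_mulVec, Matrix.one_mulVec, Matrix.smul_mulVec, vecMulVec_mulVec]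
  rw [ω, smul_smul]

lemma symT_map {S : Type*} [CommRing S] (f : R →+* S) (v : l ⊕ l → R) (c : R) :
    (symT v c).map f = symT (f ∘ v) (f c) := by
  have hJ : (Matrix.J l S) *ᵥ (f ∘ v) = f ∘ (Matrix.J l R *ᵥ v) := by
    funext k; cases k <;> simp
  ext i j
  simp [symT, Matrix.map_apply, Matrix.one_apply, hJ, Matrix.vecMulVec_apply, apply_ite f]


/-- The symplectic bilinear form (again, for the lemmas below). -/

lemma ω_self (x : l ⊕ l → R) : ω x x = 0 := J_mulVec_dot_self x

lemma ω_add_left (x x' y : l ⊕ l → R) : ω (x + x') y = ω x y + ω x' y := by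
  simp [ω, dotProduct_add]

lemma ω_add_right (x y y' : l ⊕ l → R) : ω x (y + y') = ω x y + ω x y' := by
  simp [ω, Matrix.mulVec_add, add_dotProduct]

lemma ω_smul_left (c : R) (x y : l ⊕ l → R) : ω (c • x) y = c * ω x y := by
  simp [ω, dotProduct_smul, mul_comm]

lemma ω_smul_right (c : R) (x y : l ⊕ l → R) : ω x (c • y) = c * ω x y := by
  simp [ω, Matrix.mulVec_smul, smul_dotProduct]

@[simp] lemma ω_zero_left (y : l ⊕ l → R) : ω 0 y = 0 := by simp [ω]

@[simp] lemma ω_zero_right (x : l ⊕ l → R) : ω x 0 = 0 := by simp [ω]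

lemma ω_skew (x y : l ⊕ l → R) : ω x y = -ω y x := by
  have h := J_mulVec_dot_self (x + y)
  rw [Matrix.mulVec_add, add_dotProduct, dotProduct_add, dotProduct_add]
    at h
  have hx := J_mulVec_dot_self x
  have hy := J_mulVec_dot_self y
  rw [ω, ω]
  rw [hx, hy] at h
  linear_combination h

lemma ω_sub_right (x y y' : l ⊕ l → R) : ω x (y - y') = ω x y - ω x y' := by
  have := ω_add_right x (y - y') y'
  simp at this
  linear_combination -this

lemma ω_invariant {A : Matrix (l ⊕ l) (l ⊕ l) R} (hA : A ∈ Matrix.symplecticGroup l R)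
    (x y : l ⊕ l → R) : ω (A *ᵥ x) (A *ᵥ y) = ω x y := by
  rw [SymplecticGroup.mem_iff'] at hA
  rw [ω, ω, dotProduct_comm, dotProduct_comm _ x]
  rw [Matrix.mulVec_mulVec, Matrix.dotProduct_mulVec, Matrix.dotProduct_mulVec,
    ← Matrix.vecMul_transpose, Matrix.vecMul_vecMul, ← Matrix.mul_assoc, hA]


end basics

section closure
variable {l : Type*} [DecidableEq l] [Fintype l] {R : Type*} [CommRing R]

variable {l : Type*} [DecidableEq l] [Fintype l] {R : Type*} [CommRing R]

lemma ω_apply (x y : l ⊕ l → R) :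
    ω x y = ∑ a : l, (y (Sum.inl a) * x (Sum.inr a) - y (Sum.inr a) * x (Sum.inl a)) := by
  simp only [ω, dotProduct, Fintype.sum_sum_type, J_mulVec_inl, J_mulVec_inr]
  rw [← Finset.sum_add_distrib]
  refine Finset.sum_congr rfl fun a _ => by ring

lemma exists_ω_ne_zero {x : l ⊕ l → R} (hx : x ≠ 0) : ∃ y, ω x y ≠ 0 := by
  obtain ⟨k, hk⟩ := Function.ne_iff.mp hx
  simp only [Pi.zero_apply] at hk
  rcases k with a | a
  · refine ⟨fun m => if m = Sum.inr a then 1 else 0, ?_⟩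
    rw [ω_apply]
    simp [Finset.sum_ite_eq', hk]
  · refine ⟨fun m => if m = Sum.inl a then 1 else 0, ?_⟩
    rw [ω_apply]
    simp [Finset.sum_ite_eq', hk]

variable (l R) in
/-- The submonoid generated by symplectic transvections. -/
def TCl : Submonoid (Matrix (l ⊕ l) (l ⊕ l) R) :=
  Submonoid.closure {M | ∃ v c, M = symT v c}

lemma symT_mem_TCl (v : l ⊕ l → R) (c : R) : symT v c ∈ TCl l R :=
  Submonoid.subset_closure ⟨v, c, rfl⟩

lemma TCl_le_sp : TCl l R ≤ Matrix.symplecticGroup l R :=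
  Submonoid.closure_le.2 (by rintro M ⟨v, c, rfl⟩; exact symT_mem v c)

lemma exists_inv_TCl {A : Matrix (l ⊕ l) (l ⊕ l) R} (hA : A ∈ TCl l R) :
    ∃ B ∈ TCl l R, B * A = 1 ∧ A * B = 1 := by
  induction hA using Submonoid.closure_induction with
  | mem M hM =>
    obtain ⟨v, c, rfl⟩ := hM
    refine ⟨symT v (-c), symT_mem_TCl v (-c), ?_, symT_mul_symT_neg v c⟩
    have := symT_mul_symT_neg v (-c)
    rwa [neg_neg] at this
  | one => exact ⟨1, one_mem _, by simp, by simp⟩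
  | mul A B hA hB ihA ihB =>
    obtain ⟨A', hA', h1, h2⟩ := ihA
    obtain ⟨B', hB', h3, h4⟩ := ihB
    refine ⟨B' * A', mul_mem hB' hA', ?_, ?_⟩
    · calc B' * A' * (A * B) = B' * (A' * A * B) := by noncomm_ring
        _ = 1 := by rw [h1, Matrix.one_mul, h3]
    · calc A * B * (B' * A') = A * (B * B' * A') := by noncomm_ring
        _ = 1 := by rw [h4, Matrix.one_mul, h2]

section field
variable {F : Type*} [Field F]

lemma move_of_ω_ne_zero {u v : l ⊕ l → F} (h : ω u v ≠ 0) :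
    ∃ g ∈ TCl l F, g *ᵥ u = v := by
  refine ⟨symT (v - u) (ω u v)⁻¹, symT_mem_TCl _ _, ?_⟩
  rw [symT_mulVec, ω_sub_right, ω_self, sub_zero, inv_mul_cancel₀ h, one_smul]
  abel

lemma move_any {u v : l ⊕ l → F} (hu : u ≠ 0) (hv : v ≠ 0) :
    ∃ g ∈ TCl l F, g *ᵥ u = v := by
  by_cases huv : u = v
  · exact ⟨1, one_mem _, by simp [huv]⟩
  by_cases h : ω u v ≠ 0
  · exact move_of_ω_ne_zero h
  push_neg at h
  obtain ⟨a, ha⟩ := exists_ω_ne_zero hu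
  obtain ⟨b', hb'⟩ := exists_ω_ne_zero hv
  have hbv : ω b' v ≠ 0 := by rw [ω_skew]; simpa using hb'
  -- find w with ω u w ≠ 0 and ω w v ≠ 0
  obtain ⟨w, hw1, hw2⟩ : ∃ w, ω u w ≠ 0 ∧ ω w v ≠ 0 := by
    by_cases h1 : ω a v ≠ 0
    · exact ⟨a, ha, h1⟩
    by_cases h2 : ω u b' ≠ 0
    · exact ⟨b', h2, hbv⟩
    push_neg at h1 h2
    refine ⟨a + b', ?_, ?_⟩
    · rw [ω_add_right, h2, add_zero]; exact ha
    · rw [ω_add_left, h1, zero_add]; exact hbv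
  obtain ⟨g1, hg1, hg1'⟩ := move_of_ω_ne_zero hw1
  obtain ⟨g2, hg2, hg2'⟩ := move_of_ω_ne_zero hw2
  exact ⟨g2 * g1, mul_mem hg2 hg1, by rw [← Matrix.mulVec_mulVec, hg1', hg2']⟩

lemma move_fix {v a b : l ⊕ l → F} (hva : ω v a ≠ 0) (hvab : ω v a = ω v b) :
    ∃ g ∈ TCl l F, g *ᵥ v = v ∧ g *ᵥ a = b := by
  by_cases hab : a = b
  · exact ⟨1, one_mem _, by simp, by simp [hab]⟩
  by_cases h : ω a b ≠ 0
  · refine ⟨symT (b - a) (ω a b)⁻¹, symT_mem_TCl _ _, ?_, ?_⟩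
    · rw [symT_mulVec, ω_sub_right, ← hvab, sub_self, mul_zero, zero_smul, add_zero]
    · rw [symT_mulVec, ω_sub_right, ω_self, sub_zero, inv_mul_cancel₀ h, one_smul]
      abel
  push_neg at h
  have hav : ω a v ≠ 0 := by rw [ω_skew]; simpa using hva
  set c : l ⊕ l → F := a + v with hc
  have hωvc : ω v c = ω v a := by rw [hc, ω_add_right, ω_self, add_zero]
  have hωcb : ω c b ≠ 0 := by
    rw [hc, ω_add_left, h, zero_add, ← hvab]; exact hva
  have h1 : symT v (ω a v)⁻¹ *ᵥ v = v := by
    rw [symT_mulVec, ω_self, mul_zero, zero_smul, add_zero]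
  have h2 : symT v (ω a v)⁻¹ *ᵥ a = c := by
    rw [symT_mulVec, inv_mul_cancel₀ hav, one_smul, ← hc]
  refine ⟨symT (b - c) (ω c b)⁻¹ * symT v (ω a v)⁻¹, mul_mem (symT_mem_TCl _ _)
    (symT_mem_TCl _ _), ?_, ?_⟩
  · rw [← Matrix.mulVec_mulVec, h1, symT_mulVec, ω_sub_right, hωvc, hvab, sub_self,
      mul_zero, zero_smul, add_zero]
  · rw [← Matrix.mulVec_mulVec, h2, symT_mulVec, ω_sub_right, ω_self, sub_zero,
      inv_mul_cancel₀ hωcb, one_smul]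
    abel

end field

end closure

section embed
variable {l : Type*} [DecidableEq l] [Fintype l] {R : Type*} [CommRing R] (i : l)

/-- The reindexing equivalence splitting off the `i`-th hyperbolic plane. -/
def δe : (({j : l // j ≠ i} ⊕ {j : l // j ≠ i}) ⊕ ({j : l // ¬j ≠ i} ⊕ {j : l // ¬j ≠ i}))
    ≃ (l ⊕ l) :=
  (Equiv.sumSumSumComm _ _ _ _).trans
    (Equiv.sumCongr (Equiv.sumCompl fun j => j ≠ i) (Equiv.sumCompl fun j => j ≠ i))

@[simp] lemma δe_inl_inl (a : {j : l // j ≠ i}) : δe i (Sum.inl (Sum.inl a)) = Sum.inl a.val :=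
  rfl
@[simp] lemma δe_inl_inr (a : {j : l // j ≠ i}) : δe i (Sum.inl (Sum.inr a)) = Sum.inr a.val :=
  rfl
@[simp] lemma δe_inr_inl (a : {j : l // ¬j ≠ i}) : δe i (Sum.inr (Sum.inl a)) = Sum.inl a.val :=
  rfl
@[simp] lemma δe_inr_inr (a : {j : l // ¬j ≠ i}) : δe i (Sum.inr (Sum.inr a)) = Sum.inr a.val :=
  rfl

lemma J_reindex :
    Matrix.J l R = (Matrix.fromBlocks (Matrix.J {j : l // j ≠ i} R) 0 0
      (Matrix.J {j : l // ¬j ≠ i} R)).submatrix (δe i).symm (δe i).symm := by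
  ext k m
  obtain ⟨x, rfl⟩ := (δe i).surjective k
  obtain ⟨y, rfl⟩ := (δe i).surjective m
  simp only [Matrix.submatrix_apply, Equiv.symm_apply_apply]
  rcases x with (a | a) | (a | a) <;> rcases y with (b | b) | (b | b) <;>
    simp [Matrix.J, Matrix.fromBlocks, Matrix.one_apply, Subtype.ext_iff] <;>
    aesop

end embed


section embed2
variable {l : Type*} [DecidableEq l] [Fintype l] {R : Type*} [CommRing R] (i : l)

instance : Unique {j : l // ¬j ≠ i} where
  default := ⟨i, not_not_intro rfl⟩
  uniq x := Subtype.ext (not_not.mp x.2)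

/-- Embed a matrix on the complement of the `i`-th hyperbolic plane. -/
def emb (C : Matrix ({j : l // j ≠ i} ⊕ {j : l // j ≠ i})
    ({j : l // j ≠ i} ⊕ {j : l // j ≠ i}) R) : Matrix (l ⊕ l) (l ⊕ l) R :=
  (Matrix.fromBlocks C 0 0 1).submatrix (δe i).symm (δe i).symm

lemma emb_mul (C D) : emb (R := R) i (C * D) = emb i C * emb i D := by
  rw [emb, emb, emb, Matrix.submatrix_mul_equiv, Matrix.fromBlocks_multiply]
  simp

lemma emb_transpose (C) : (emb (R := R) i C)ᵀ = emb i Cᵀ := by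
  rw [emb, emb, Matrix.transpose_submatrix, Matrix.fromBlocks_transpose]
  simp

/-- Extend a vector by zero. -/
def ve (v : ({j : l // j ≠ i} ⊕ {j : l // j ≠ i}) → R) : l ⊕ l → R :=
  fun k => Sum.elim v 0 ((δe i).symm k)

lemma J_mulVec_ve (v : ({j : l // j ≠ i} ⊕ {j : l // j ≠ i}) → R) :
    Matrix.J l R *ᵥ ve i v = ve i (Matrix.J {j : l // j ≠ i} R *ᵥ v) := by
  funext k
  rcases k with a | a <;> by_cases ha : a ≠ i
  · rw [J_mulVec_inl]
    have h1 : (δe i).symm (Sum.inr a) = Sum.inl (Sum.inr ⟨a, ha⟩) :=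
      (δe i).injective (by simp)
    have h2 : (δe i).symm (Sum.inl a) = Sum.inl (Sum.inl ⟨a, ha⟩) :=
      (δe i).injective (by simp)
    simp [ve, h1, h2]
  · push_neg at ha
    subst ha
    rw [J_mulVec_inl]
    have h1 : (δe a).symm (Sum.inr a) = Sum.inr (Sum.inr ⟨a, not_not_intro rfl⟩) :=
      (δe a).injective (by simp)
    have h2 : (δe a).symm (Sum.inl a) = Sum.inr (Sum.inl ⟨a, not_not_intro rfl⟩) :=
      (δe a).injective (by simp)
    simp [ve, h1, h2]
  · rw [J_mulVec_inr]
    have h1 : (δe i).symm (Sum.inr a) = Sum.inl (Sum.inr ⟨a, ha⟩) :=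
      (δe i).injective (by simp)
    have h2 : (δe i).symm (Sum.inl a) = Sum.inl (Sum.inl ⟨a, ha⟩) :=
      (δe i).injective (by simp)
    simp [ve, h1, h2]
  · push_neg at ha
    subst ha
    rw [J_mulVec_inr]
    have h1 : (δe a).symm (Sum.inr a) = Sum.inr (Sum.inr ⟨a, not_not_intro rfl⟩) :=
      (δe a).injective (by simp)
    have h2 : (δe a).symm (Sum.inl a) = Sum.inr (Sum.inl ⟨a, not_not_intro rfl⟩) :=
      (δe a).injective (by simp)
    simp [ve, h1, h2]

lemma emb_symT (v : ({j : l // j ≠ i} ⊕ {j : l // j ≠ i}) → R) (c : R) :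
    emb i (symT v c) = symT (ve i v) c := by
  have hblock : Matrix.fromBlocks (symT v c) 0 0 (1 : Matrix ({j : l // ¬j ≠ i} ⊕ {j : l // ¬j ≠ i}) ({j : l // ¬j ≠ i} ⊕ {j : l // ¬j ≠ i}) R)
      = 1 + c • Matrix.vecMulVec (Sum.elim v 0)
        (Sum.elim (Matrix.J {j : l // j ≠ i} R *ᵥ v) 0) := by
    ext x y
    rcases x with x | x <;> rcases y with y | y <;>
      simp [symT, Matrix.fromBlocks, Matrix.vecMulVec_apply, Matrix.one_apply]
  rw [emb, hblock]
  have hsub : ∀ (M : Matrix (({j : l // j ≠ i} ⊕ {j : l // j ≠ i}) ⊕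
        ({j : l // ¬j ≠ i} ⊕ {j : l // ¬j ≠ i})) (({j : l // j ≠ i} ⊕ {j : l // j ≠ i}) ⊕
        ({j : l // ¬j ≠ i} ⊕ {j : l // ¬j ≠ i})) R),
      (1 + c • M).submatrix (δe i).symm (δe i).symm
        = 1 + c • M.submatrix (δe i).symm (δe i).symm := by
    intro M
    simp [Matrix.submatrix_add, Matrix.submatrix_smul, Matrix.submatrix_one_equiv]
  rw [hsub, symT, J_mulVec_ve]
  ext k m
  simp [Matrix.vecMulVec_apply, ve, Matrix.submatrix_apply, Matrix.one_apply]

lemma emb_mem_TCl {C} (hC : C ∈ TCl {j : l // j ≠ i} R) : emb i C ∈ TCl l R := by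
  induction hC using Submonoid.closure_induction with
  | mem M hM =>
    obtain ⟨v, c, rfl⟩ := hM
    rw [emb_symT]
    exact symT_mem_TCl _ _
  | one =>
    have : emb (R := R) i 1 = 1 := by
      rw [emb]
      ext k m
      rcases hk : (δe i).symm k with x | x <;> rcases hm : (δe i).symm m with y | y <;>
        simp [Matrix.fromBlocks, Matrix.one_apply, hk, hm, Matrix.submatrix_apply,
          ← (δe i).symm.injective.eq_iff, hk, hm] <;> aesop
    rw [this]; exact one_mem _
  | mul A B hA hB ihA ihB =>
    rw [emb_mul]
    exact mul_mem ihA ihB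

end embed2


section block
variable {l : Type*} [DecidableEq l] [Fintype l] {R : Type*} [CommRing R] (i : l)

lemma exists_block {B : Matrix (l ⊕ l) (l ⊕ l) R} (hB : B ∈ Matrix.symplecticGroup l R)
    (hcl : ∀ k, B k (Sum.inl i) = (1 : Matrix (l ⊕ l) (l ⊕ l) R) k (Sum.inl i))
    (hcr : ∀ k, B k (Sum.inr i) = (1 : Matrix (l ⊕ l) (l ⊕ l) R) k (Sum.inr i))
    (hrl : ∀ m, B (Sum.inl i) m = (1 : Matrix (l ⊕ l) (l ⊕ l) R) (Sum.inl i) m)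
    (hrr : ∀ m, B (Sum.inr i) m = (1 : Matrix (l ⊕ l) (l ⊕ l) R) (Sum.inr i) m) :
    ∃ C ∈ Matrix.symplecticGroup {j : l // j ≠ i} R, B = emb i C := by
  set C : Matrix ({j : l // j ≠ i} ⊕ {j : l // j ≠ i}) ({j : l // j ≠ i} ⊕ {j : l // j ≠ i}) R :=
    fun x y => B (δe i (Sum.inl x)) (δe i (Sum.inl y)) with hC
  have hBC : B = emb i C := by
    ext k m
    obtain ⟨x, rfl⟩ := (δe i).surjective k
    obtain ⟨y, rfl⟩ := (δe i).surjective m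
    rw [emb, Matrix.submatrix_apply, Equiv.symm_apply_apply, Equiv.symm_apply_apply]
    rcases x with x | x
    · rcases y with y | y
      · rfl
      · -- y in the i-block: column is standard
        rcases y with c | c
        · rw [show (δe i) (Sum.inr (Sum.inl c)) = Sum.inl i by
            simp [not_not.mp c.2]]
          rw [hcl]
          rcases x with a | a <;>
            simp [Matrix.fromBlocks, Matrix.one_apply, Sum.inl.injEq, a.2]
        · rw [show (δe i) (Sum.inr (Sum.inr c)) = Sum.inr i by
            simp [not_not.mp c.2]]
          rw [hcr]
          rcases x with a | a <;>
            simp [Matrix.fromBlocks, Matrix.one_apply, a.2]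
    · rcases x with c | c
      · rw [show (δe i) (Sum.inr (Sum.inl c)) = Sum.inl i by simp [not_not.mp c.2]]
        rw [hrl]
        rcases y with (b | b) | (b | b)
        · simp [Matrix.fromBlocks, Matrix.one_apply, Ne.symm b.2]
        · simp [Matrix.fromBlocks, Matrix.one_apply]
        · have hb : (b : l) = i := not_not.mp b.2
          have hcb : c = b := Subsingleton.elim c b
          simp [Matrix.fromBlocks, Matrix.one_apply, hb, hcb]
        · simp [Matrix.fromBlocks, Matrix.one_apply]
      · rw [show (δe i) (Sum.inr (Sum.inr c)) = Sum.inr i by simp [not_not.mp c.2]]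
        rw [hrr]
        rcases y with (b | b) | (b | b)
        · simp [Matrix.fromBlocks, Matrix.one_apply]
        · simp [Matrix.fromBlocks, Matrix.one_apply, Ne.symm b.2]
        · simp [Matrix.fromBlocks, Matrix.one_apply]
        · have hb : (b : l) = i := not_not.mp b.2
          have hcb : c = b := Subsingleton.elim c b
          simp [Matrix.fromBlocks, Matrix.one_apply, hb, hcb]
  refine ⟨C, ?_, hBC⟩
  -- C is symplectic
  rw [SymplecticGroup.mem_iff]
  rw [SymplecticGroup.mem_iff, hBC, J_reindex i] at hB
  unfold emb at hB
  rw [Matrix.transpose_submatrix, Matrix.fromBlocks_transpose] at hB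
  rw [Matrix.submatrix_mul_equiv, Matrix.submatrix_mul_equiv] at hB
  have hB' := congrArg (fun M => M.submatrix (δe i) (δe i)) hB
  simp only [Matrix.submatrix_submatrix, Equiv.symm_comp_self, Matrix.submatrix_id_id] at hB'
  rw [Matrix.fromBlocks_multiply, Matrix.fromBlocks_multiply] at hB'
  have := congrArg Matrix.toBlocks₁₁ hB'
  simp only [Matrix.toBlocks_fromBlocks₁₁] at this
  simpa using this

end block


section main
variable {F : Type*} [Field F]

section main
variable {F : Type*} [Field F]

theorem sp_eq_TCl_aux : ∀ (N : ℕ) (l : Type) [DecidableEq l] [Fintype l],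
    Fintype.card l ≤ N → ∀ A ∈ Matrix.symplecticGroup l F, A ∈ TCl l F := by
  intro N
  induction N with
  | zero =>
    intro l _ _ hcard A hA
    haveI : IsEmpty l := Fintype.card_eq_zero_iff.mp (Nat.le_zero.mp hcard)
    have : A = 1 := Subsingleton.elim A 1
    rw [this]; exact one_mem _
  | succ N ih =>
    intro l _ _ hcard A hA
    rcases isEmpty_or_nonempty l with hl | hl
    · have : A = 1 := Subsingleton.elim A 1
      rw [this]; exact one_mem _
    obtain ⟨i⟩ := hl
    -- basis vectors
    set e : l ⊕ l → F := fun k => if k = Sum.inl i then 1 else 0 with he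
    set f : l ⊕ l → F := fun k => if k = Sum.inr i then 1 else 0 with hf
    have hωe : ∀ y : l ⊕ l → F, ω e y = -y (Sum.inr i) := by
      intro y
      rw [ω_apply]
      simp [he, Finset.sum_ite_eq']
    have hωf : ∀ y : l ⊕ l → F, ω f y = y (Sum.inl i) := by
      intro y
      rw [ω_apply]
      simp [hf, Finset.sum_ite_eq']
    have hωfe : ∀ y : l ⊕ l → F, ω y e = y (Sum.inr i) := by
      intro y
      rw [ω_apply]
      simp [he, Finset.sum_ite_eq']
    have hef : ω e f = -1 := by rw [hωe]; simp [hf]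
    have hefne : ω e f ≠ 0 := by rw [hef]; exact neg_ne_zero.mpr one_ne_zero
    have hene : e ≠ 0 := by
      intro h
      have := congrFun h (Sum.inl i)
      simp [he] at this
    set u : l ⊕ l → F := A *ᵥ e with hu
    set u' : l ⊕ l → F := A *ᵥ f with hu'
    have hωuu' : ω u u' = -1 := by rw [hu, hu', ω_invariant hA, hef]
    have hune : u ≠ 0 := by
      intro h
      rw [h, ω_zero_left] at hωuu'
      exact neg_ne_zero.mpr one_ne_zero hωuu'.symm
    obtain ⟨g1, hg1, hg1u⟩ := move_any hune hene
    have hg1sp := TCl_le_sp hg1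
    have hea : ω e (g1 *ᵥ u') = -1 := by
      rw [← hg1u, ω_invariant hg1sp, hωuu']
    have heaf : ω e (g1 *ᵥ u') = ω e f := by rw [hea, hef]
    have heane : ω e (g1 *ᵥ u') ≠ 0 := by rw [hea]; exact neg_ne_zero.mpr one_ne_zero
    obtain ⟨g2, hg2, hg2e, hg2a⟩ := move_fix heane heaf
    set B := g2 * g1 * A with hB
    have hBsp : B ∈ Matrix.symplecticGroup l F :=
      mul_mem (mul_mem (TCl_le_sp hg2) (TCl_le_sp hg1)) hA
    have hBe : B *ᵥ e = e := by
      rw [hB, ← Matrix.mulVec_mulVec, ← Matrix.mulVec_mulVec, ← hu, hg1u, hg2e]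
    have hBf : B *ᵥ f = f := by
      rw [hB, ← Matrix.mulVec_mulVec, ← Matrix.mulVec_mulVec, ← hu', hg2a]
    -- column conditions
    have hmulVec_e : ∀ (M : Matrix (l ⊕ l) (l ⊕ l) F) k, (M *ᵥ e) k = M k (Sum.inl i) := by
      intro M k
      simp [Matrix.mulVec, dotProduct, he, Finset.sum_ite_eq']
    have hmulVec_f : ∀ (M : Matrix (l ⊕ l) (l ⊕ l) F) k, (M *ᵥ f) k = M k (Sum.inr i) := by
      intro M k
      simp [Matrix.mulVec, dotProduct, hf, Finset.sum_ite_eq']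
    have hcl : ∀ k, B k (Sum.inl i) = (1 : Matrix (l ⊕ l) (l ⊕ l) F) k (Sum.inl i) := by
      intro k
      have h := congrFun hBe k
      rw [hmulVec_e] at h
      rw [h, he, Matrix.one_apply]
    have hcr : ∀ k, B k (Sum.inr i) = (1 : Matrix (l ⊕ l) (l ⊕ l) F) k (Sum.inr i) := by
      intro k
      have h := congrFun hBf k
      rw [hmulVec_f] at h
      rw [h, hf, Matrix.one_apply]
    -- row conditions via invariance
    have hrowr : ∀ x : l ⊕ l → F, (B *ᵥ x) (Sum.inr i) = x (Sum.inr i) := by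
      intro x
      have h1 : ω e (B *ᵥ x) = ω e x := by
        conv_lhs => rw [← hBe]
        exact ω_invariant hBsp e x
      rw [hωe, hωe] at h1
      exact neg_injective h1
    have hrowl : ∀ x : l ⊕ l → F, (B *ᵥ x) (Sum.inl i) = x (Sum.inl i) := by
      intro x
      have h1 : ω f (B *ᵥ x) = ω f x := by
        conv_lhs => rw [← hBf]
        exact ω_invariant hBsp f x
      rw [hωf, hωf] at h1
      exact h1
    have hbasis : ∀ m : l ⊕ l, ∃ em : l ⊕ l → F, (∀ M : Matrix (l ⊕ l) (l ⊕ l) F,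
        ∀ k, (M *ᵥ em) k = M k m) ∧ ∀ k, em k = (1 : Matrix (l ⊕ l) (l ⊕ l) F) k m := by
      intro m
      refine ⟨fun k => if k = m then 1 else 0, fun M k => ?_, fun k => ?_⟩
      · simp [Matrix.mulVec, dotProduct, Finset.sum_ite_eq']
      · rw [Matrix.one_apply]
    have hrl : ∀ m, B (Sum.inl i) m = (1 : Matrix (l ⊕ l) (l ⊕ l) F) (Sum.inl i) m := by
      intro m
      obtain ⟨em, hem1, hem2⟩ := hbasis m
      have h := hrowl em
      rw [hem1 B] at h
      rw [h]
      exact hem2 (Sum.inl i)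
    have hrr : ∀ m, B (Sum.inr i) m = (1 : Matrix (l ⊕ l) (l ⊕ l) F) (Sum.inr i) m := by
      intro m
      obtain ⟨em, hem1, hem2⟩ := hbasis m
      have h := hrowr em
      rw [hem1 B] at h
      rw [h]
      exact hem2 (Sum.inr i)
    obtain ⟨C, hCsp, hBC⟩ := exists_block i hBsp hcl hcr hrl hrr
    have hcard' : Fintype.card {j : l // j ≠ i} ≤ N := by
      have h1 := Fintype.card_subtype_lt (p := fun j : l => j ≠ i) (x := i) (by simp)
      have h2 : Fintype.card {j : l // j ≠ i} = Fintype.card {x // (fun j : l => j ≠ i) x} :=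
        Fintype.card_congr (Equiv.refl _)
      omega
    have hC : C ∈ TCl {j : l // j ≠ i} F := ih _ hcard' C hCsp
    have hBmem : B ∈ TCl l F := hBC ▸ emb_mem_TCl i hC
    obtain ⟨g1', hg1', hg1'l, hg1'r⟩ := exists_inv_TCl hg1
    obtain ⟨g2', hg2', hg2'l, hg2'r⟩ := exists_inv_TCl hg2
    have hA' : A = g1' * (g2' * B) := by
      rw [hB]
      calc A = (g1' * g1) * A := by rw [hg1'l, Matrix.one_mul]
        _ = g1' * (g2' * g2 * (g1 * A)) := by rw [hg2'l]; noncomm_ring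
        _ = g1' * (g2' * (g2 * g1 * A)) := by noncomm_ring
    rw [hA']
    exact mul_mem hg1' (mul_mem hg2' hBmem)

end main

end main


lemma symT_zero {l : Type*} [DecidableEq l] [Fintype l] {R : Type*} [CommRing R]
    (v : l ⊕ l → R) : symT v 0 = 1 := by simp [symT]

lemma map_one_mat {l : Type*} [DecidableEq l] [Fintype l] {R S : Type*} [CommRing R] [CommRing S]
    (f : R →+* S) : (1 : Matrix (l ⊕ l) (l ⊕ l) R).map f = 1 :=
  Matrix.map_one f f.map_zero f.map_one

section lift
variable (n p q : ℕ) [Fact q.Prime] [NeZero q]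

lemma exists_lift (hco : IsCoprime (p : ℤ) (q : ℤ)) (c : Matrix.symplecticGroup (Fin n) ℤ) :
    ∃ h : Matrix.symplecticGroup (Fin n) ℤ,
      (spReduce (Fin n) (Int.castRingHom (ZMod p))) h = 1 ∧
      (spReduce (Fin n) (Int.castRingHom (ZMod q))) h =
        spReduce (Fin n) (Int.castRingHom (ZMod q)) c := by
  obtain ⟨a, b, hab⟩ := hco
  set fp := Int.castRingHom (ZMod p)
  set fq := Int.castRingHom (ZMod q)
  have key : ∀ M ∈ TCl (Fin n) (ZMod q), ∃ H : Matrix (Fin n ⊕ Fin n) (Fin n ⊕ Fin n) ℤ,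
      H ∈ Matrix.symplecticGroup (Fin n) ℤ ∧ H.map fp = 1 ∧ H.map fq = M := by
    intro M hM
    induction hM using Submonoid.closure_induction with
    | mem M hMm =>
      obtain ⟨v, cc, rfl⟩ := hMm
      set w : (Fin n ⊕ Fin n) → ℤ := fun k => ((v k).val : ℤ) with hw
      set μ : ℤ := (cc.val : ℤ) * (a * p) with hμ
      refine ⟨symT w μ, symT_mem w μ, ?_, ?_⟩
      · rw [symT_map]
        have : fp μ = 0 := by
          simp [hμ, fp]
        rw [this, symT_zero]
      · rw [symT_map]
        have hap : a * (p : ℤ) = 1 - b * q := by linarith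
        have h1 : fq μ = cc := by
          simp only [hμ, hap, fq, Int.coe_castRingHom]
          push_cast
          simp [ZMod.natCast_self, ZMod.natCast_val, ZMod.cast_id]
        have h2 : fq ∘ w = v := by
          funext k
          simp only [Function.comp_apply, hw, fq, Int.coe_castRingHom]
          push_cast
          rw [ZMod.natCast_val, ZMod.cast_id]
        rw [h1, h2]
    | one => exact ⟨1, one_mem _, map_one_mat fp, map_one_mat fq⟩
    | mul M M' hMm hM'm ihM ihM' =>
      obtain ⟨H, hH, hH1, hH2⟩ := ihM
      obtain ⟨H', hH', hH'1, hH'2⟩ := ihM'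
      exact ⟨H * H', mul_mem hH hH', by rw [Matrix.map_mul, hH1, hH'1, one_mul],
        by rw [Matrix.map_mul, hH2, hH'2]⟩
  have hMT : c.1.map fq ∈ TCl (Fin n) (ZMod q) :=
    sp_eq_TCl_aux (Fintype.card (Fin n)) (Fin n) le_rfl _ (mem_sp_map fq c.1 c.2)
  obtain ⟨H, hH, hH1, hH2⟩ := key _ hMT
  exact ⟨⟨H, hH⟩, Subtype.ext hH1, Subtype.ext hH2⟩

end lift
end SpGen

open SpGen in
theorem sp_quotient_inf_ker_iso (n : ℕ) (hn : 1 ≤ n) (p q : ℕ) (hp : p.Prime) (hq : q.Prime)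
    (hpq : p ≠ q) :
    ∃ e : Matrix.symplecticGroup (Fin n) ℤ ⧸
          ((spReduce (Fin n) (Int.castRingHom (ZMod p))).ker ⊓
            (spReduce (Fin n) (Int.castRingHom (ZMod q))).ker) ≃*
        (Matrix.symplecticGroup (Fin n) ℤ ⧸ (spReduce (Fin n) (Int.castRingHom (ZMod p))).ker) ×
          (Matrix.symplecticGroup (Fin n) ℤ ⧸ (spReduce (Fin n) (Int.castRingHom (ZMod q))).ker),
      ∀ A : Matrix.symplecticGroup (Fin n) ℤ,
        e (QuotientGroup.mk A) = (QuotientGroup.mk A, QuotientGroup.mk A) := by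
  haveI := Fact.mk hq
  haveI : NeZero q := ⟨hq.pos.ne'⟩
  set Np := (spReduce (Fin n) (Int.castRingHom (ZMod p))).ker with hNp
  set Nq := (spReduce (Fin n) (Int.castRingHom (ZMod q))).ker with hNq
  set φ := (QuotientGroup.mk' Np).prod (QuotientGroup.mk' Nq) with hφdef
  have hco : IsCoprime (p : ℤ) (q : ℤ) :=
    Nat.isCoprime_iff_coprime.mpr ((Nat.coprime_primes hp hq).mpr hpq)
  have hsurj : Function.Surjective φ := by
    rintro ⟨x, y⟩
    obtain ⟨aG, rfl⟩ := QuotientGroup.mk'_surjective Np x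
    obtain ⟨bG, rfl⟩ := QuotientGroup.mk'_surjective Nq y
    obtain ⟨h, hh1, hh2⟩ := exists_lift n p q hco (aG⁻¹ * bG)
    refine ⟨aG * h, Prod.ext ?_ ?_⟩
    · show QuotientGroup.mk' Np (aG * h) = QuotientGroup.mk' Np aG
      rw [QuotientGroup.mk'_eq_mk']
      refine ⟨h⁻¹, inv_mem (MonoidHom.mem_ker.mpr hh1), by group⟩
    · show QuotientGroup.mk' Nq (aG * h) = QuotientGroup.mk' Nq bG
      rw [QuotientGroup.mk'_eq_mk']
      refine ⟨h⁻¹ * (aG⁻¹ * bG), ?_, by group⟩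
      refine MonoidHom.mem_ker.mpr ?_
      rw [_root_.map_mul, map_inv, hh2]
      exact inv_mul_cancel _
  have hker : Np ⊓ Nq = φ.ker := by
    ext g
    rw [MonoidHom.mem_ker, Subgroup.mem_inf, hφdef, MonoidHom.prod_apply, Prod.mk_eq_one,
      QuotientGroup.mk'_apply, QuotientGroup.mk'_apply, QuotientGroup.eq_one_iff,
      QuotientGroup.eq_one_iff]
  refine ⟨(QuotientGroup.quotientMulEquivOfEq hker).trans
    (QuotientGroup.quotientKerEquivOfSurjective φ hsurj), fun A => ?_⟩
  rw [MulEquiv.trans_apply, QuotientGroup.quotientMulEquivOfEq_mk]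
  rfl
end

section
/- Let n ≥ 1 and let H be a finite-index subgroup of Sp(2n, ℤ). For all but finitely many primes p, the composite homomorphism H → Sp(2n, ℤ/pℤ) → Sp(2n, ℤ/pℤ)/Z(Sp(2n, ℤ/pℤ)), obtained by reducing entries modulo p and then passing to the quotient by the center, is surjective. -/
/-!
Over a field `F`, `Sp(2n, F)` is generated by the symplectic transvections
`x ↦ x + c ω(x, v) v`. Given `A` fixing the basis vectors `eᵢ, fᵢ` for `i ∉ s` and some `a ∈ s`,
the pair `(eₐ A, fₐ A)` has the same pairing as `(eₐ, fₐ)` and lies in the coordinate block of `s`,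
so at most four transvections along vectors of that block (which therefore fix `eᵢ, fᵢ` for
`i ∉ s`) move it back to `(eₐ, fₐ)`; induction on `s` finishes.

Since transvections lift from `ℤ/p` to `ℤ`, reduction `Sp(2n, ℤ) → Sp(2n, ℤ/p)` is onto, so the
image of `H` has index at most `[Sp(2n, ℤ) : H]`. Transvections have order `p` in
characteristic `p`, and an element `g` of order `p` lies in every subgroup `K` of index `< p`: the relative index of `K`
in `⟨g⟩` divides `p` and is `< p`. Hence `H` maps onto `Sp(2n, ℤ/p)` for every prime
`p > [Sp(2n, ℤ) : H]`.
-/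

open Matrix

namespace Matrix.SymplecticGroup

variable {l R : Type*} [CommRing R]

variable (R) in
def blockSubmodule (t : Finset l) : Submodule R (l ⊕ l → R) where
  carrier := {x | ∀ j : l ⊕ l, Sum.elim id id j ∉ t → x j = 0}
  add_mem' hx hy j hj := by simp [hx j hj, hy j hj]
  zero_mem' _ _ := rfl
  smul_mem' c x hx j hj := by simp [hx j hj]

variable [DecidableEq l]

lemma single_mem_blockSubmodule {t : Finset l} {j : l ⊕ l} (hj : Sum.elim id id j ∈ t) :
    Pi.single j 1 ∈ blockSubmodule R t := fun k hk =>
  Pi.single_eq_of_ne (by rintro rfl; exact hk hj) _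

variable [Fintype l]

variable (l R) in
def symplecticForm : LinearMap.BilinForm R (l ⊕ l → R) :=
  Matrix.toLinearMap₂' R (J l R)

local notation "ω" => symplecticForm _ _

lemma symplecticForm_apply (x y : l ⊕ l → R) :
    ω x y = ∑ i, (x (Sum.inr i) * y (Sum.inl i) - x (Sum.inl i) * y (Sum.inr i)) := by
  simp [symplecticForm, Matrix.toLinearMap₂'_apply', J, dotProduct, mulVec, one_apply,
    Fintype.sum_sum_type, sub_eq_neg_add, Finset.sum_add_distrib]

lemma symplecticForm_isAlt : LinearMap.IsAlt (symplecticForm l R) := fun x => by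
  simp [symplecticForm_apply, mul_comm]

lemma symplecticForm_swap (x y : l ⊕ l → R) : ω y x = -ω x y :=
  (symplecticForm_isAlt.neg x y).symm

lemma symplecticForm_single_eq_zero_iff (x : l ⊕ l → R) (j : l ⊕ l) :
    ω x (Pi.single j 1) = 0 ↔ x j.swap = 0 := by
  cases j <;> simp [symplecticForm_apply, Pi.single_apply]

lemma symplecticForm_vecMul_vecMul (A : Matrix (l ⊕ l) (l ⊕ l) R) (x y : l ⊕ l → R) :
    ω (x ᵥ* A) (y ᵥ* A) = Matrix.toLinearMap₂' R (A * J l R * Aᵀ) x y := by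
  simpa [symplecticForm, mulVec_transpose] using congr($(toLinearMap₂'_comp (J l R) Aᵀ Aᵀ) x y)

lemma mem_iff_forall_symplecticForm {A : Matrix (l ⊕ l) (l ⊕ l) R} :
    A ∈ symplecticGroup l R ↔ ∀ x y, ω (x ᵥ* A) (y ᵥ* A) = ω x y := by
  simp_rw [symplecticForm_vecMul_vecMul, ← LinearMap.ext_iff₂, symplecticForm,
    (Matrix.toLinearMap₂' R).injective.eq_iff, SymplecticGroup.mem_iff]

def transvection (v : l ⊕ l → R) (c : R) : Matrix (l ⊕ l) (l ⊕ l) R :=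
  1 + c • vecMulVec (J l R *ᵥ v) v

lemma vecMul_transvection (x v : l ⊕ l → R) (c : R) :
    x ᵥ* transvection v c = x + (c * ω x v) • v := by
  simp [transvection, vecMul_add, vecMul_smul, vecMul_vecMulVec, symplecticForm,
    toLinearMap₂'_apply', smul_smul]

lemma transvection_mem (v : l ⊕ l → R) (c : R) : transvection v c ∈ symplecticGroup l R := by
  refine mem_iff_forall_symplecticForm.2 fun x y => ?_
  simp only [vecMul_transvection, map_add, map_smul, LinearMap.add_apply, LinearMap.smul_apply,
    symplecticForm_isAlt.self_eq_zero, smul_eq_mul, symplecticForm_swap y v]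
  ring

lemma transvection_zero (v : l ⊕ l → R) : transvection v 0 = 1 := by
  simp [transvection]

lemma transvection_mul (v : l ⊕ l → R) (c d : R) :
    transvection v c * transvection v d = transvection v (c + d) := by
  refine ext_iff_vecMul.2 fun x => ?_
  simp only [← vecMul_vecMul, vecMul_transvection, map_add, map_smul, LinearMap.add_apply,
    LinearMap.smul_apply, symplecticForm_isAlt.self_eq_zero, smul_eq_mul]
  module

lemma transvection_pow (v : l ⊕ l → R) (c : R) (k : ℕ) :
    transvection v c ^ k = transvection v (k * c) := by
  induction k with
  | zero => rw [pow_zero, Nat.cast_zero, zero_mul, transvection_zero]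
  | succ k ih => rw [pow_succ, ih, transvection_mul, Nat.cast_succ, add_one_mul]

lemma map_transvection {S : Type*} [CommRing S] (f : R →+* S) (v : l ⊕ l → R) (c : R) :
    (transvection v c).map f = transvection (f ∘ v) (f c) := by
  ext i j
  simp [transvection, vecMulVec_apply, RingHom.map_mulVec, map_J, one_apply, apply_ite f]

def symplecticTransvection (v : l ⊕ l → R) (c : R) : symplecticGroup l R :=
  ⟨transvection v c, transvection_mem v c⟩

variable (l R) in
def transvectionSubgroup : Subgroup (symplecticGroup l R) :=
  Subgroup.closure (Set.range (Function.uncurry symplecticTransvection))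

lemma symplecticTransvection_mem_transvectionSubgroup (v : l ⊕ l → R) (c : R) :
    symplecticTransvection v c ∈ transvectionSubgroup l R :=
  Subgroup.subset_closure ⟨(v, c), rfl⟩

lemma symplecticTransvection_pow_char (p : ℕ) [CharP R p] (v : l ⊕ l → R) (c : R) :
    symplecticTransvection v c ^ p = 1 :=
  Subtype.ext <| by
    rw [SubmonoidClass.coe_pow, symplecticTransvection, transvection_pow, CharP.cast_eq_zero,
      zero_mul, transvection_zero, Submonoid.coe_one]

variable (l R) in
def fixingOutside (t : Finset l) : Subgroup (symplecticGroup l R) where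
  carrier := {A | ∀ j : l ⊕ l, Sum.elim id id j ∉ t → Pi.single j 1 ᵥ* A.1 = Pi.single j 1}
  mul_mem' {A B} hA hB j hj := by
    rw [Submonoid.coe_mul, ← vecMul_vecMul, hA j hj, hB j hj]
  one_mem' j _ := vecMul_one _
  inv_mem' {A} hA j hj := by
    conv_lhs => rw [← hA j hj]
    rw [vecMul_vecMul, ← Submonoid.coe_mul, mul_inv_cancel, Submonoid.coe_one, vecMul_one]

lemma mem_blockSubmodule_iff_symplecticForm {t : Finset l} {x : l ⊕ l → R} :
    x ∈ blockSubmodule R t ↔ ∀ j : l ⊕ l, Sum.elim id id j ∉ t → ω x (Pi.single j 1) = 0 := by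
  have elim_swap (j : l ⊕ l) : Sum.elim id id j.swap = Sum.elim id id j := by cases j <;> rfl
  simp_rw [symplecticForm_single_eq_zero_iff]
  exact ⟨fun hx j hj => hx _ (elim_swap j ▸ hj),
    fun hx j hj => j.swap_swap ▸ hx _ ((elim_swap j).symm ▸ hj)⟩

lemma symplecticForm_vecMul_vecMul_of_mem {A : Matrix (l ⊕ l) (l ⊕ l) R}
    (hA : A ∈ symplecticGroup l R) (x y : l ⊕ l → R) : ω (x ᵥ* A) (y ᵥ* A) = ω x y :=
  mem_iff_forall_symplecticForm.1 hA x y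

lemma vecMul_mem_blockSubmodule {t : Finset l} {A : symplecticGroup l R}
    (hA : A ∈ fixingOutside l R t) {x : l ⊕ l → R} (hx : x ∈ blockSubmodule R t) :
    x ᵥ* A.1 ∈ blockSubmodule R t := by
  rw [mem_blockSubmodule_iff_symplecticForm] at hx ⊢
  intro j hj
  rw [← hA j hj, symplecticForm_vecMul_vecMul_of_mem A.2, hx j hj]

lemma symplecticTransvection_mem_fixingOutside {t : Finset l} {w : l ⊕ l → R}
    (hw : w ∈ blockSubmodule R t) (c : R) :
    symplecticTransvection w c ∈ fixingOutside l R t := fun j hj => by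
  rw [symplecticTransvection, vecMul_transvection, symplecticForm_swap,
    mem_blockSubmodule_iff_symplecticForm.1 hw j hj]
  simp

lemma exists_symplecticForm_ne_zero {t : Finset l} {x : l ⊕ l → R}
    (hx : x ∈ blockSubmodule R t) (hx0 : x ≠ 0) :
    ∃ y ∈ blockSubmodule R t, ω x y ≠ 0 := by
  obtain ⟨j, hj⟩ := Function.ne_iff.1 hx0
  have hjt : Sum.elim id id j.swap ∈ t := by
    by_contra h
    have := mem_blockSubmodule_iff_symplecticForm.1 hx _ h
    rw [symplecticForm_single_eq_zero_iff, Sum.swap_swap] at this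
    exact hj this
  refine ⟨_, single_mem_blockSubmodule hjt, ?_⟩
  rwa [Ne, symplecticForm_single_eq_zero_iff, Sum.swap_swap]

lemma exists_symplecticForm_ne_zero_ne_zero {t : Finset l} {u v : l ⊕ l → R}
    (hu : u ∈ blockSubmodule R t) (hv : v ∈ blockSubmodule R t) (hu0 : u ≠ 0) (hv0 : v ≠ 0) :
    ∃ w ∈ blockSubmodule R t, ω u w ≠ 0 ∧ ω v w ≠ 0 := by
  obtain ⟨y, hy, huy⟩ := exists_symplecticForm_ne_zero hu hu0
  obtain ⟨z, hz, hvz⟩ := exists_symplecticForm_ne_zero hv hv0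
  by_cases hvy : ω v y = 0
  · by_cases huz : ω u z = 0
    · exact ⟨y + z, add_mem hy hz, by simpa [huz], by simpa [hvy]⟩
    · exact ⟨z, hz, huz, hvz⟩
  · exact ⟨y, hy, huy, hvy⟩

def Moves (t : Finset l) (X : Set (l ⊕ l → R)) (a b : l ⊕ l → R) : Prop :=
  ∃ B ∈ transvectionSubgroup l R ⊓ fixingOutside l R t,
    a ᵥ* B.1 = b ∧ ∀ x ∈ X, x ᵥ* B.1 = x

lemma Moves.trans {t : Finset l} {X : Set (l ⊕ l → R)} {a b c : l ⊕ l → R}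
    (hab : Moves t X a b) (hbc : Moves t X b c) : Moves t X a c := by
  obtain ⟨B, hB, hab, hBX⟩ := hab
  obtain ⟨C, hC, hbc, hCX⟩ := hbc
  refine ⟨B * C, mul_mem hB hC, ?_, fun x hx => ?_⟩
  · rw [Submonoid.coe_mul, ← vecMul_vecMul, hab, hbc]
  · rw [Submonoid.coe_mul, ← vecMul_vecMul, hBX x hx, hCX x hx]

section Field

variable {F : Type*} [Field F]

lemma moves_of_symplecticForm_ne_zero {t : Finset l} {X : Set (l ⊕ l → F)} {a b : l ⊕ l → F}
    (ha : a ∈ blockSubmodule F t) (hb : b ∈ blockSubmodule F t) (hab : ω a b ≠ 0)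
    (hX : ∀ x ∈ X, ω x a = ω x b) : Moves t X a b := by
  refine ⟨symplecticTransvection (b - a) (ω a b)⁻¹,
    ⟨symplecticTransvection_mem_transvectionSubgroup _ _,
      symplecticTransvection_mem_fixingOutside (sub_mem hb ha) _⟩, ?_, fun x hx => ?_⟩
  · rw [symplecticTransvection, vecMul_transvection, map_sub, symplecticForm_isAlt.self_eq_zero,
      sub_zero, inv_mul_cancel₀ hab, one_smul, add_sub_cancel]
  · rw [symplecticTransvection, vecMul_transvection, map_sub, hX x hx, sub_self, mul_zero,
      zero_smul, add_zero]

lemma moves_of_ne_zero {t : Finset l} {u v : l ⊕ l → F} (hu : u ∈ blockSubmodule F t)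
    (hv : v ∈ blockSubmodule F t) (hu0 : u ≠ 0) (hv0 : v ≠ 0) : Moves t ∅ u v := by
  by_cases huv : ω u v = 0
  · obtain ⟨w, hw, huw, hvw⟩ := exists_symplecticForm_ne_zero_ne_zero hu hv hu0 hv0
    rw [← neg_ne_zero, ← symplecticForm_swap] at hvw
    exact (moves_of_symplecticForm_ne_zero hu hw huw (by simp)).trans
      (moves_of_symplecticForm_ne_zero hw hv hvw (by simp))
  · exact moves_of_symplecticForm_ne_zero hu hv huv (by simp)

lemma moves_of_symplecticForm_eq {t : Finset l} {e w f : l ⊕ l → F}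
    (he : e ∈ blockSubmodule F t) (hw : w ∈ blockSubmodule F t) (hf : f ∈ blockSubmodule F t)
    (hew : ω e w = ω e f) (hef : ω e f ≠ 0) : Moves t {e} w f := by
  by_cases hwf : ω w f = 0
  · have hwg : ω w (e + w) ≠ 0 := by
      rwa [map_add, symplecticForm_isAlt.self_eq_zero, add_zero, symplecticForm_swap, neg_ne_zero,
        hew]
    have hgf : ω (e + w) f ≠ 0 := by rwa [map_add, LinearMap.add_apply, hwf, add_zero]
    refine (moves_of_symplecticForm_ne_zero hw (add_mem he hw) hwg ?_).trans
      (moves_of_symplecticForm_ne_zero (add_mem he hw) hf hgf ?_) <;>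
    · rintro x rfl
      rw [map_add, symplecticForm_isAlt.self_eq_zero, zero_add, hew]
  · refine moves_of_symplecticForm_ne_zero hw hf hwf ?_
    rintro x rfl
    exact hew

lemma exists_mem_vecMul_eq_and_vecMul_eq {t : Finset l} {u w e f : l ⊕ l → F}
    (hu : u ∈ blockSubmodule F t) (hw : w ∈ blockSubmodule F t) (he : e ∈ blockSubmodule F t)
    (hf : f ∈ blockSubmodule F t) (huw : ω u w = ω e f) (hef : ω e f ≠ 0) :
    ∃ B ∈ transvectionSubgroup l F ⊓ fixingOutside l F t, u ᵥ* B.1 = e ∧ w ᵥ* B.1 = f := by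
  have hu0 : u ≠ 0 := by rintro rfl; exact hef (by simpa using huw.symm)
  have he0 : e ≠ 0 := by rintro rfl; simp at hef
  obtain ⟨B, hB, hBu, -⟩ := moves_of_ne_zero hu he hu0 he0
  have hew : ω e (w ᵥ* B.1) = ω e f := by
    rw [← huw, ← symplecticForm_vecMul_vecMul_of_mem B.2 u w, hBu]
  obtain ⟨C, hC, hCw, hCe⟩ :=
    moves_of_symplecticForm_eq he (vecMul_mem_blockSubmodule hB.2 hw) hf hew hef
  refine ⟨B * C, mul_mem hB hC, ?_, ?_⟩
  · rw [Submonoid.coe_mul, ← vecMul_vecMul, hBu, hCe e rfl]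
  · rw [Submonoid.coe_mul, ← vecMul_vecMul, hCw]

lemma mem_transvectionSubgroup_of_mem_fixingOutside (s : Finset l) :
    ∀ A ∈ fixingOutside l F s, A ∈ transvectionSubgroup l F := by
  induction s using Finset.induction_on with
  | empty =>
    intro A hA
    have hA1 : A = 1 := Subtype.ext <| Matrix.ext fun i j => by
      simpa [single_one_vecMul, one_apply, Pi.single_apply, eq_comm] using
        congrFun (hA i (Finset.notMem_empty _)) j
    exact hA1 ▸ one_mem _
  | insert a s ha ih =>
    intro A hA
    have hsingle (j : l ⊕ l) (hj : Sum.elim id id j = a) :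
        Pi.single j 1 ∈ blockSubmodule F (insert a s) :=
      single_mem_blockSubmodule (hj ▸ Finset.mem_insert_self _ _)
    obtain ⟨B, hB, hBe, hBf⟩ := exists_mem_vecMul_eq_and_vecMul_eq
      (vecMul_mem_blockSubmodule hA (hsingle (.inl a) rfl))
      (vecMul_mem_blockSubmodule hA (hsingle (.inr a) rfl))
      (hsingle (.inl a) rfl) (hsingle (.inr a) rfl)
      (symplecticForm_vecMul_vecMul_of_mem A.2 _ _)
      (by simp [symplecticForm_apply, Pi.single_apply])
    have hAB : A * B ∈ fixingOutside l F s := by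
      intro j hj
      rw [Submonoid.coe_mul, ← vecMul_vecMul]
      by_cases hja : Sum.elim id id j = a
      · cases j <;> cases hja
        exacts [hBe, hBf]
      · have hj' : Sum.elim id id j ∉ insert a s := by simp [hja, hj]
        rw [hA j hj', hB.2 j hj']
    simpa using mul_mem (ih _ hAB) (inv_mem hB.1)

variable (l F) in
theorem transvectionSubgroup_eq_top : transvectionSubgroup l F = ⊤ :=
  eq_top_iff.2 fun A _ => mem_transvectionSubgroup_of_mem_fixingOutside Finset.univ A
    fun _ hj => absurd (Finset.mem_univ _) hj

end Field

end Matrix.SymplecticGroup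

section Reduction

open Matrix.SymplecticGroup

variable {l R : Type*} [DecidableEq l] [Fintype l] [CommRing R]

lemma spReduce_symplecticTransvection {S : Type*} [CommRing S] (f : R →+* S) (v : l ⊕ l → R)
    (c : R) : spReduce l f (symplecticTransvection v c) = symplecticTransvection (f ∘ v) (f c) :=
  Subtype.ext (map_transvection f v c)

lemma spReduce_surjective {F : Type*} [Field F] {f : R →+* F} (hf : Function.Surjective f) :
    Function.Surjective (spReduce l f) := by
  rw [← MonoidHom.range_eq_top, eq_top_iff, ← transvectionSubgroup_eq_top l F,
    transvectionSubgroup, Subgroup.closure_le]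
  rintro _ ⟨⟨v, c⟩, rfl⟩
  obtain ⟨v, rfl⟩ := hf.comp_left v
  obtain ⟨c, rfl⟩ := hf c
  exact ⟨_, spReduce_symplecticTransvection f v c⟩

end Reduction

namespace Subgroup

variable {G : Type*} [Group G] {p : ℕ} {K : Subgroup G} [K.FiniteIndex]

theorem mem_of_pow_prime_eq_one_of_index_lt (hp : p.Prime) (hK : K.index < p) {g : G}
    (hg : g ^ p = 1) : g ∈ K := by
  have hdvd : K.relIndex (zpowers g) ∣ p :=
    (relIndex_dvd_card K _).trans (Nat.card_zpowers g ▸ orderOf_dvd_of_pow_eq_one hg)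
  have hle : K.relIndex (zpowers g) ≤ K.index := by
    rw [← relIndex_top_right]
    exact relIndex_le_of_le_right le_top (relIndex_top_right K ▸ FiniteIndex.index_ne_zero)
  rcases hp.eq_one_or_self_of_dvd _ hdvd with h | h
  · exact relIndex_eq_one.1 h (mem_zpowers g)
  · omega

theorem eq_top_of_index_lt_of_closure_eq_top (hp : p.Prime) (hK : K.index < p) {S : Set G}
    (hS : closure S = ⊤) (hSp : ∀ g ∈ S, g ^ p = 1) : K = ⊤ := by
  rw [eq_top_iff, ← hS, closure_le]
  exact fun g hg => mem_of_pow_prime_eq_one_of_index_lt hp hK (hSp g hg)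

end Subgroup

open Matrix.SymplecticGroup in
theorem sp_reduction_mod_center_surjective_on_finite_index_general (n : ℕ)
    (H : Subgroup (Matrix.symplecticGroup (Fin n) ℤ)) (hH : H.FiniteIndex) :
    {p : ℕ | p.Prime ∧ ¬ Function.Surjective
        ((QuotientGroup.mk' (Subgroup.center (Matrix.symplecticGroup (Fin n) (ZMod p)))).comp
          ((spReduce (Fin n) (Int.castRingHom (ZMod p))).comp H.subtype))}.Finite := by
  refine (Set.finite_Iic H.index).subset fun p ⟨hp, hns⟩ =>
    Set.mem_Iic.2 <| not_lt.1 fun hpH => hns ?_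
  have : Fact p.Prime := ⟨hp⟩
  set red := spReduce (Fin n) (Int.castRingHom (ZMod p))
  have hred : Function.Surjective red := spReduce_surjective (ZMod.ringHom_surjective _)
  have hdvd : (H.map red).index ∣ H.index := H.index_map_dvd hred
  have : (H.map red).FiniteIndex := ⟨ne_zero_of_dvd_ne_zero hH.index_ne_zero hdvd⟩
  have hmap : H.map red = ⊤ :=
    Subgroup.eq_top_of_index_lt_of_closure_eq_top hp
      ((Nat.le_of_dvd (Nat.pos_of_ne_zero hH.index_ne_zero) hdvd).trans_lt hpH)
      (transvectionSubgroup_eq_top (Fin n) (ZMod p))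
      (by rintro _ ⟨⟨v, c⟩, rfl⟩; exact symplecticTransvection_pow_char p v c)
  refine (QuotientGroup.mk'_surjective _).comp (MonoidHom.range_eq_top.1 ?_)
  rw [MonoidHom.range_comp, Subgroup.range_subtype, hmap]

theorem sp_reduction_mod_center_surjective_on_finite_index (n : ℕ) (hn : 1 ≤ n)
    (H : Subgroup (Matrix.symplecticGroup (Fin n) ℤ)) (hH : H.FiniteIndex) :
    {p : ℕ | p.Prime ∧ ¬ Function.Surjective
        ((QuotientGroup.mk' (Subgroup.center (Matrix.symplecticGroup (Fin n) (ZMod p)))).comp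
          ((spReduce (Fin n) (Int.castRingHom (ZMod p))).comp H.subtype))}.Finite :=
  sp_reduction_mod_center_surjective_on_finite_index_general n H hH
end
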